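/- arXiv:1706.07403 — 2 statements merged into one kernel-verified Lean document; each statement's English description precedes it below -/
import Mathlib

section
/- If the weight vector w ∈ ℝ^n is adapted to (μ, ν), i.e. μ(Vor_S^w(i)) = λ_i for every i ∈ {1,…,n}, then T_S^w is a transport map from μ to ν whose cost is minimal among all transport maps from μ to ν, and any transport map from μ to ν achieving this minimal cost agrees with T_S^w μ-almost everywhere. -/
/-!
The weights act as a Kantorovich potential on the sites: extend `w` to a function `φ` with
`φ (s i) = w i`. The inequalities defining the cells say that the Voronoi map `V` minimises
`y ↦ ‖x - y‖ - φ y` over the sites at every `x`. For a transport map `T`, both `φ ∘ V` and `φ ∘ T`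
integrate to `∫ φ dν`, so integrating the pointwise inequality gives `c(V) ≤ c(T)`, and equality
forces `x` into the cell of `T x` for `μ`-a.e. `x`. Since the cells cover the space and their
measures add up to `1`, their overlaps are `μ`-null; so a.e. `x` lies in exactly one cell, which
gives both `T = V` a.e. and `μ (Tsel ⁻¹' {i}) = λ i`, i.e. `V` pushes `μ` to `ν`.
-/

open MeasureTheory

/-- The additively weighted Voronoi cell of the site `s i` with weight vector `w`. -/
def vorCell {d n : ℕ} (s : Fin n → EuclideanSpace ℝ (Fin d)) (w : Fin n → ℝ) (i : Fin n) :
    Set (EuclideanSpace ℝ (Fin d)) :=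
  {x | ∀ j, ‖x - s i‖ - w i ≤ ‖x - s j‖ - w j}

open Set

section Selection

variable {α ι : Type*} [MeasurableSpace α] [MeasurableSpace ι] [MeasurableSingletonClass ι]
  [Fintype ι] {μ : Measure α} [IsFiniteMeasure μ] {A : ι → Set α} {f : α → ι}

theorem measure_diff_preimage_singleton_eq_zero (hf : Measurable f) (hfA : ∀ i, f ⁻¹' {i} ⊆ A i)
    (hA : ∑ i, μ (A i) = μ univ) (i : ι) : μ (A i \ f ⁻¹' {i}) = 0 := by
  have hpart : ∑ i, μ (f ⁻¹' {i}) = μ univ := by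
    rw [sum_measure_preimage_singleton _ fun i _ => hf (measurableSet_singleton i)]
    simp
  have hdiff : μ univ + ∑ i, μ (A i \ f ⁻¹' {i}) = μ univ + 0 := by
    calc μ univ + ∑ i, μ (A i \ f ⁻¹' {i}) = ∑ i, μ (A i) := by
          rw [← hpart, ← Finset.sum_add_distrib]
          refine Finset.sum_congr rfl fun i _ => ?_
          rw [measure_add_sdiff (hf (measurableSet_singleton i)).nullMeasurableSet,
            union_eq_right.2 (hfA i)]
      _ = μ univ + 0 := by rw [hA, add_zero]
  exact Finset.sum_eq_zero_iff.1 ((ENNReal.add_right_inj (measure_ne_top μ univ)).1 hdiff) i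
    (Finset.mem_univ i)

theorem measure_preimage_singleton_eq_of_sum_measure_eq (hf : Measurable f)
    (hfA : ∀ i, f ⁻¹' {i} ⊆ A i) (hA : ∑ i, μ (A i) = μ univ) (i : ι) :
    μ (f ⁻¹' {i}) = μ (A i) :=
  measure_eq_measure_of_null_sdiff (hfA i) (measure_diff_preimage_singleton_eq_zero hf hfA hA i)

theorem ae_forall_mem_imp_eq_of_sum_measure_eq (hf : Measurable f) (hfA : ∀ i, f ⁻¹' {i} ⊆ A i)
    (hA : ∑ i, μ (A i) = μ univ) : ∀ᵐ x ∂μ, ∀ i, x ∈ A i → f x = i := by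
  refine ae_all_iff.2 fun i => ?_
  filter_upwards [measure_eq_zero_iff_ae_notMem.1
    (measure_diff_preimage_singleton_eq_zero hf hfA hA i)] with x hx hxA
  by_contra hne
  exact hx ⟨hxA, hne⟩

end Selection

theorem MeasureTheory.Measure.map_comp_eq_sum_smul_dirac {α ι β : Type*} [MeasurableSpace α]
    [MeasurableSpace ι] [MeasurableSingletonClass ι] [Fintype ι] [MeasurableSpace β]
    (μ : Measure α) {f : α → ι} {s : ι → β} (hf : Measurable f) (hs : Measurable s) :
    μ.map (s ∘ f) = ∑ i, μ (f ⁻¹' {i}) • Measure.dirac (s i) := by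
  rw [← Measure.map_map hs hf, Measure.map_eq_sum μ f hf, Measure.map_sum hs.aemeasurable,
    Measure.sum_fintype]
  simp_rw [Measure.map_smul, Measure.map_dirac' hs]

section Potential

variable {α β : Type*} [MeasurableSpace α] [MeasurableSpace β] {μ : Measure α} {V T : α → β}
  {φ : β → ℝ} {c cV cT : α → ℝ}

theorem MeasureTheory.Integrable.sub_comp (hc : Integrable c μ) (hφ : Integrable φ (μ.map T))
    (hT : AEMeasurable T μ) : Integrable (fun x => c x - φ (T x)) μ :=
  hc.sub (hφ.comp_aemeasurable hT)

theorem integral_sub_comp_eq (hc : Integrable c μ) (hφ : Integrable φ (μ.map T))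
    (hT : AEMeasurable T μ) :
    ∫ x, (c x - φ (T x)) ∂μ = ∫ x, c x ∂μ - ∫ y, φ y ∂μ.map T := by
  rw [integral_sub hc (g := fun x => φ (T x)) (hφ.comp_aemeasurable hT),
    integral_map hT hφ.aestronglyMeasurable]

variable (hV : AEMeasurable V μ) (hT : AEMeasurable T μ) (hVT : μ.map V = μ.map T)
  (hφ : Integrable φ (μ.map T)) (hcV : Integrable cV μ) (hcT : Integrable cT μ)
  (hle : ∀ x, cV x - φ (V x) ≤ cT x - φ (T x))
include hV hT hVT hφ hcV hcT hle

theorem integral_le_integral_of_sub_potential_le : ∫ x, cV x ∂μ ≤ ∫ x, cT x ∂μ := by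
  have hφV : Integrable φ (μ.map V) := hVT ▸ hφ
  have := integral_mono (hcV.sub_comp hφV hV) (hcT.sub_comp hφ hT) hle
  rw [integral_sub_comp_eq hcV hφV hV, integral_sub_comp_eq hcT hφ hT, hVT] at this
  linarith

theorem ae_sub_potential_eq_of_integral_eq (heq : ∫ x, cV x ∂μ = ∫ x, cT x ∂μ) :
    ∀ᵐ x ∂μ, cV x - φ (V x) = cT x - φ (T x) := by
  have hφV : Integrable φ (μ.map V) := hVT ▸ hφ
  have hzero : ∫ x, ((cT x - φ (T x)) - (cV x - φ (V x))) ∂μ = 0 := by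
    rw [integral_sub (hcT.sub_comp hφ hT) (hcV.sub_comp hφV hV), integral_sub_comp_eq hcV hφV hV,
      integral_sub_comp_eq hcT hφ hT, hVT, heq, sub_self]
  filter_upwards [(integral_eq_zero_iff_of_nonneg (fun x => sub_nonneg.2 (hle x))
    ((hcT.sub_comp hφ hT).sub (hcV.sub_comp hφV hV))).1 hzero] with x hx
  exact (sub_eq_zero.1 hx).symm

end Potential

theorem integrable_norm_sub_of_norm_le {E : Type*} [NormedAddCommGroup E] [MeasurableSpace E]
    [BorelSpace E] [SecondCountableTopology E] {μ : Measure E} [IsFiniteMeasure μ]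
    (hμ : Integrable (fun x => ‖x‖) μ) {T : E → E} (hT : Measurable T) {C : ℝ}
    (hC : ∀ x, ‖T x‖ ≤ C) : Integrable (fun x => ‖x - T x‖) μ :=
  (hμ.add (integrable_const C)).mono' (measurable_id.sub hT).norm.aestronglyMeasurable
    (ae_of_all _ fun x => by
      rw [norm_norm]
      exact (norm_sub_le _ _).trans (add_le_add le_rfl (hC x)))

section SitePotential

variable {E ι : Type*} [Fintype ι] {s : ι → E} {w : ι → ℝ}

noncomputable def sitePotential (s : ι → E) (w : ι → ℝ) (y : E) : ℝ :=
  ∑ i, ({s i} : Set E).indicator (fun _ => w i) y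

theorem sitePotential_apply_site (hs : Function.Injective s) (i : ι) :
    sitePotential s w (s i) = w i := by
  classical
  simp [sitePotential, Set.indicator_apply, hs.eq_iff]

theorem integrable_sitePotential [MeasurableSpace E] [MeasurableSingletonClass E]
    (μ : Measure E) [IsFiniteMeasure μ] : Integrable (sitePotential s w) μ := by
  unfold sitePotential
  exact integrable_finsetSum _ fun i _ =>
    (integrable_const (w i)).indicator (measurableSet_singleton (s i))

end SitePotential

section vorCell

variable {d n : ℕ} {s : Fin n → EuclideanSpace ℝ (Fin d)} {w : Fin n → ℝ}
  {x : EuclideanSpace ℝ (Fin d)} {i : Fin n}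

theorem norm_sub_sub_sitePotential_le_of_mem_vorCell (hs : Function.Injective s)
    (hx : x ∈ vorCell s w i) {y : EuclideanSpace ℝ (Fin d)} (hy : y ∈ range s) :
    ‖x - s i‖ - sitePotential s w (s i) ≤ ‖x - y‖ - sitePotential s w y := by
  obtain ⟨j, rfl⟩ := hy
  simpa only [sitePotential_apply_site hs] using hx j

theorem mem_vorCell_of_le (hx : x ∈ vorCell s w i) {j : Fin n}
    (h : ‖x - s j‖ - w j ≤ ‖x - s i‖ - w i) : x ∈ vorCell s w j :=
  fun k => h.trans (hx k)

end vorCell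

theorem adapted_voronoi_map_optimal_general {d n : ℕ}
    (μ : Measure (EuclideanSpace ℝ (Fin d))) [IsProbabilityMeasure μ]
    (hint : Integrable (fun x => ‖x‖) μ)
    (s : Fin n → EuclideanSpace ℝ (Fin d)) (hs : Function.Injective s)
    (lam : Fin n → ℝ) (hlam : ∀ i, 0 < lam i) (hlamSum : ∑ i, lam i = 1)
    (ν : Measure (EuclideanSpace ℝ (Fin d)))
    (hν : ν = ∑ i, ENNReal.ofReal (lam i) • Measure.dirac (s i))
    (w : Fin n → ℝ)
    (hadapted : ∀ i, μ (vorCell s w i) = ENNReal.ofReal (lam i))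
    (Tsel : EuclideanSpace ℝ (Fin d) → Fin n) (hTselMeas : Measurable Tsel)
    (hTsel : ∀ x, x ∈ vorCell s w (Tsel x)) :
    Measure.map (fun x => s (Tsel x)) μ = ν ∧
    (∀ T : EuclideanSpace ℝ (Fin d) → EuclideanSpace ℝ (Fin d),
      Measurable T → (∀ x, T x ∈ Set.range s) → Measure.map T μ = ν →
      ∫ x, ‖x - s (Tsel x)‖ ∂μ ≤ ∫ x, ‖x - T x‖ ∂μ) ∧
    (∀ T : EuclideanSpace ℝ (Fin d) → EuclideanSpace ℝ (Fin d),
      Measurable T → (∀ x, T x ∈ Set.range s) → Measure.map T μ = ν →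
      ∫ x, ‖x - T x‖ ∂μ = ∫ x, ‖x - s (Tsel x)‖ ∂μ →
      ∀ᵐ x ∂μ, T x = s (Tsel x)) := by
  have hV : Measurable fun x => s (Tsel x) := (measurable_of_countable s).comp hTselMeas
  have hsel : ∀ i, Tsel ⁻¹' {i} ⊆ vorCell s w i := fun i x hx => (mem_singleton_iff.1 hx) ▸ hTsel x
  have hcells : ∑ i, μ (vorCell s w i) = μ univ := by
    rw [measure_univ, Finset.sum_congr rfl fun i _ => hadapted i,
      ← ENNReal.ofReal_sum_of_nonneg fun i _ => (hlam i).le, hlamSum, ENNReal.ofReal_one]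
  have hpush : μ.map (fun x => s (Tsel x)) = ν := by
    rw [hν, ← Function.comp_def, μ.map_comp_eq_sum_smul_dirac hTselMeas (measurable_of_countable s)]
    simp_rw [measure_preimage_singleton_eq_of_sum_measure_eq hTselMeas hsel hcells, hadapted]
  obtain ⟨C, hC⟩ := isBounded_iff_forall_norm_le.1 (finite_range s).isBounded
  have hcost : ∀ T : EuclideanSpace ℝ (Fin d) → EuclideanSpace ℝ (Fin d), Measurable T →
      (∀ x, T x ∈ range s) → Integrable (fun x => ‖x - T x‖) μ :=
    fun T hT hTs => integrable_norm_sub_of_norm_le hint hT fun x => hC _ (hTs x)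
  have hle : ∀ T : EuclideanSpace ℝ (Fin d) → EuclideanSpace ℝ (Fin d), (∀ x, T x ∈ range s) →
      ∀ x, ‖x - s (Tsel x)‖ - sitePotential s w (s (Tsel x)) ≤
        ‖x - T x‖ - sitePotential s w (T x) :=
    fun T hTs x => norm_sub_sub_sitePotential_le_of_mem_vorCell hs (hTsel x) (hTs x)
  refine ⟨hpush, fun T hT hTs hTν => ?_, fun T hT hTs hTν heq => ?_⟩
  · exact integral_le_integral_of_sub_potential_le hV.aemeasurable hT.aemeasurable
      (hpush.trans hTν.symm) (integrable_sitePotential _) (hcost _ hV fun x => mem_range_self _)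
      (hcost T hT hTs) (hle T hTs)
  · filter_upwards [ae_sub_potential_eq_of_integral_eq hV.aemeasurable hT.aemeasurable
        (hpush.trans hTν.symm) (integrable_sitePotential _) (hcost _ hV fun x => mem_range_self _)
        (hcost T hT hTs) (hle T hTs) heq.symm,
      ae_forall_mem_imp_eq_of_sum_measure_eq hTselMeas hsel hcells] with x hx hunique
    obtain ⟨j, hj⟩ := hTs x
    rw [← hj] at hx ⊢
    simp only [sitePotential_apply_site hs] at hx
    rw [hunique j (mem_vorCell_of_le (hTsel x) hx.ge)]

/-- If `w` is adapted to `(μ, ν)`, i.e. `μ(Vor_S^w(i)) = λ i` for all `i`, then the Voronoi map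
`T_S^w` (given by a measurable selection `Tsel` of Voronoi cells, `T_S^w = s ∘ Tsel`) is a
transport map from `μ` to `ν` of minimal cost, and any transport map from `μ` to `ν` achieving
the minimal cost agrees with it `μ`-almost everywhere. -/
theorem adapted_voronoi_map_optimal {d n : ℕ}
    (μ : Measure (EuclideanSpace ℝ (Fin d))) [IsProbabilityMeasure μ]
    (hac : μ ≪ volume)
    (hint : Integrable (fun x => ‖x‖) μ)
    (s : Fin n → EuclideanSpace ℝ (Fin d)) (hs : Function.Injective s)
    (lam : Fin n → ℝ) (hlam : ∀ i, 0 < lam i) (hlamSum : ∑ i, lam i = 1)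
    (ν : Measure (EuclideanSpace ℝ (Fin d)))
    (hν : ν = ∑ i, ENNReal.ofReal (lam i) • Measure.dirac (s i))
    (w : Fin n → ℝ)
    (hadapted : ∀ i, μ (vorCell s w i) = ENNReal.ofReal (lam i))
    (Tsel : EuclideanSpace ℝ (Fin d) → Fin n) (hTselMeas : Measurable Tsel)
    (hTsel : ∀ x, x ∈ vorCell s w (Tsel x)) :
    Measure.map (fun x => s (Tsel x)) μ = ν ∧
    (∀ T : EuclideanSpace ℝ (Fin d) → EuclideanSpace ℝ (Fin d),
      Measurable T → (∀ x, T x ∈ Set.range s) → Measure.map T μ = ν →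
      ∫ x, ‖x - s (Tsel x)‖ ∂μ ≤ ∫ x, ‖x - T x‖ ∂μ) ∧
    (∀ T : EuclideanSpace ℝ (Fin d) → EuclideanSpace ℝ (Fin d),
      Measurable T → (∀ x, T x ∈ Set.range s) → Measure.map T μ = ν →
      ∫ x, ‖x - T x‖ ∂μ = ∫ x, ‖x - s (Tsel x)‖ ∂μ →
      ∀ᵐ x ∂μ, T x = s (Tsel x)) :=
  adapted_voronoi_map_optimal_general μ hint s hs lam hlam hlamSum ν hν w hadapted Tsel hTselMeas
    hTsel
end

section
/- If w* ∈ ℝ^n is a minimizer of the function Φ(w) := Σ_{i=1}^n ( −λ_i w_i − ∫_{Vor_S^w(i)} (‖x − s^i‖ − w_i) dμ(x) ), then w* is adapted to (μ, ν), i.e. μ(Vor_S^{w*}(i)) = λ_i for every i ∈ {1,…,n}. -/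
open MeasureTheory

/-- The objective function `Φ(w) = Σ_i ( -λ_i w_i - ∫_{Vor_S^w(i)} (‖x - s^i‖ - w_i) dμ(x) )`. -/
noncomputable def Phi {d n : ℕ} (μ : Measure (EuclideanSpace ℝ (Fin d)))
    (s : Fin n → EuclideanSpace ℝ (Fin d)) (lam : Fin n → ℝ) (w : Fin n → ℝ) : ℝ :=
  ∑ i, (-(lam i) * w i - ∫ x in vorCell s w i, (‖x - s i‖ - w i) ∂μ)

/-!
Write `m_w(x) = min_j (‖x - s j‖ - w j)`. Adding a constant `c` to every weight leaves the cells
unchanged and changes `Φ` by `c (Σ_i μ(Vor^w(i)) - Σ_i λ_i)`; since `Φ` is bounded below, this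
slope vanishes for every `w`. The cells cover the space, so their measures summing to `1` forces
them to overlap only in null sets, whence `Φ(w) = -⟨λ, w⟩ - ∫ m_w dμ`. Raising `w*_i` by `t > 0`
lowers `m` by at most `t`, and only on the new cell `i`, so minimality gives
`λ_i ≤ μ(Vor^{w* + t e_i}(i))`; letting `t ↓ 0`, `λ_i ≤ μ(Vor^{w*}(i))`. Both sides sum to `1`,
so equality holds for every `i`.
-/

open Function

theorem pairwise_aedisjoint_of_sum_measureReal_le {ι α : Type*} [Fintype ι] [MeasurableSpace α]
    {μ : Measure α} [IsFiniteMeasure μ] {A : ι → Set α} (hA : ∀ i, NullMeasurableSet (A i) μ)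
    (hcover : ⋃ i, A i = Set.univ) (hsum : ∑ i, μ.real (A i) ≤ μ.real Set.univ) :
    Pairwise (AEDisjoint μ on A) := by
  classical
  intro i j hij
  set C := ⋃ k ∈ Finset.univ.erase i, A k
  have hcover' : A i ∪ C = Set.univ := by
    refine Set.eq_univ_of_univ_subset (hcover ▸ Set.iUnion_subset fun k => ?_)
    rcases eq_or_ne k i with rfl | hk
    · exact Set.subset_union_left
    · exact Set.subset_union_of_subset_right
        (Set.subset_biUnion_of_mem (u := A) (Finset.mem_erase.2 ⟨hk, Finset.mem_univ k⟩)) _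
  have hunion := measureReal_union_add_inter₀' (hA i) (measure_ne_top μ _) (measure_ne_top μ C)
  have hC : μ.real C ≤ ∑ k ∈ Finset.univ.erase i, μ.real (A k) := measureReal_biUnion_finset_le _ _
  have hsplit := Finset.add_sum_erase _ (fun k => μ.real (A k)) (Finset.mem_univ i)
  rw [hcover'] at hunion
  have hnull : μ.real (A i ∩ C) = 0 := le_antisymm (by linarith) measureReal_nonneg
  refine measure_mono_null (Set.inter_subset_inter_right _ ?_) ((measureReal_eq_zero_iff).1 hnull)
  exact Set.subset_biUnion_of_mem (u := A) (Finset.mem_erase.2 ⟨hij.symm, Finset.mem_univ j⟩)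

theorem integrable_norm_sub_sub {E : Type*} [NormedAddCommGroup E] [MeasurableSpace E]
    {μ : Measure E} [IsFiniteMeasure μ] (hμ : Integrable id μ) (p : E) (a : ℝ) :
    Integrable (fun x => ‖x - p‖ - a) μ :=
  (hμ.sub (integrable_const p)).norm.sub (integrable_const a)

section VoronoiCells

variable {d n : ℕ} {s : Fin n → EuclideanSpace ℝ (Fin d)} {w : Fin n → ℝ}
  {x : EuclideanSpace ℝ (Fin d)} {i : Fin n}

theorem measurableSet_vorCell (s : Fin n → EuclideanSpace ℝ (Fin d)) (w : Fin n → ℝ)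
    (i : Fin n) : MeasurableSet (vorCell s w i) := by
  rw [vorCell, Set.ofPred_forall]
  exact MeasurableSet.iInter fun j => measurableSet_le (by fun_prop) (by fun_prop)

theorem vorCell_add_const (c : ℝ) : vorCell s (w + fun _ => c) i = vorCell s w i := by
  ext x
  refine forall_congr' fun j => ?_
  simp only [Pi.add_apply]
  constructor <;> intro h <;> linarith

theorem mem_vorCell_add_single {t : ℝ} :
    x ∈ vorCell s (w + Pi.single i t) i ↔ ∀ j ≠ i, ‖x - s i‖ - (w i + t) ≤ ‖x - s j‖ - w j := by
  refine forall_congr' fun j => ?_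
  rcases eq_or_ne j i with rfl | hj
  · simp
  · simp [hj]

theorem monotone_vorCell_add_single : Monotone fun t => vorCell s (w + Pi.single i t) i :=
  fun _ _ hst _ hx => mem_vorCell_add_single.2 fun j hj => by
    linarith [mem_vorCell_add_single.1 hx j hj]

theorem iInter_vorCell_add_single :
    ⋂ k : ℕ, vorCell s (w + Pi.single i (1 / ((k : ℝ) + 1))) i = vorCell s w i := by
  ext x
  simp only [Set.mem_iInter, mem_vorCell_add_single]
  constructor
  · intro hx j
    rcases eq_or_ne j i with rfl | hj
    · exact le_rfl
    · by_contra hlt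
      obtain ⟨k, hk⟩ := exists_nat_one_div_lt (sub_pos.2 (not_le.1 hlt))
      linarith [hx k j hj]
  · intro hx k j hj
    have : (0 : ℝ) < 1 / ((k : ℝ) + 1) := Nat.one_div_pos_of_nat
    linarith [hx j]

end VoronoiCells

noncomputable def weightedDist {d n : ℕ} [Nonempty (Fin n)] (s : Fin n → EuclideanSpace ℝ (Fin d))
    (w : Fin n → ℝ) (x : EuclideanSpace ℝ (Fin d)) : ℝ :=
  Finset.univ.inf' Finset.univ_nonempty fun j => ‖x - s j‖ - w j

section WeightedDist

variable {d n : ℕ} [Nonempty (Fin n)] {s : Fin n → EuclideanSpace ℝ (Fin d)} {w : Fin n → ℝ}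
  {x : EuclideanSpace ℝ (Fin d)} {i : Fin n}

theorem weightedDist_le (j : Fin n) : weightedDist s w x ≤ ‖x - s j‖ - w j :=
  Finset.inf'_le _ (Finset.mem_univ j)

theorem le_weightedDist {c : ℝ} (h : ∀ j, c ≤ ‖x - s j‖ - w j) : c ≤ weightedDist s w x :=
  Finset.le_inf' _ _ fun j _ => h j

theorem weightedDist_eq_of_mem_vorCell (h : x ∈ vorCell s w i) :
    weightedDist s w x = ‖x - s i‖ - w i :=
  le_antisymm (weightedDist_le i) (le_weightedDist h)

theorem exists_mem_vorCell (s : Fin n → EuclideanSpace ℝ (Fin d)) (w : Fin n → ℝ)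
    (x : EuclideanSpace ℝ (Fin d)) : ∃ i, x ∈ vorCell s w i := by
  obtain ⟨i, -, hi⟩ := Finset.exists_mem_eq_inf' Finset.univ_nonempty
    fun j => ‖x - s j‖ - w j
  exact ⟨i, fun j => hi ▸ weightedDist_le j⟩

theorem iUnion_vorCell : ⋃ i, vorCell s w i = Set.univ :=
  Set.eq_univ_of_forall fun x => Set.mem_iUnion.2 (exists_mem_vorCell s w x)

theorem weightedDist_sub_le_indicator {t : ℝ} (ht : 0 ≤ t) (x : EuclideanSpace ℝ (Fin d)) :
    weightedDist s w x - weightedDist s (w + Pi.single i t) x ≤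
      (vorCell s (w + Pi.single i t) i).indicator (fun _ => t) x := by
  have hw : ∀ j, (w + Pi.single i t : Fin n → ℝ) j ≤ w j + t := fun j => by
    rcases eq_or_ne j i with rfl | hj <;> simp [*]
  have hlower : weightedDist s w x - t ≤ weightedDist s (w + Pi.single i t) x :=
    le_weightedDist fun j => by linarith [weightedDist_le (s := s) (w := w) (x := x) j, hw j]
  by_cases hx : x ∈ vorCell s (w + Pi.single i t) i
  · rw [Set.indicator_of_mem hx]
    linarith
  · rw [Set.indicator_of_notMem hx]
    obtain ⟨k, hk⟩ := exists_mem_vorCell s (w + Pi.single i t) x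
    have hki : k ≠ i := by rintro rfl; exact hx hk
    rw [weightedDist_eq_of_mem_vorCell hk]
    simpa [hki] using weightedDist_le (s := s) (w := w) (x := x) k

variable {μ : Measure (EuclideanSpace ℝ (Fin d))} [IsFiniteMeasure μ]

theorem integrable_weightedDist (hμ : Integrable id μ) : Integrable (weightedDist s w) μ := by
  have : weightedDist s w = Finset.univ.inf' Finset.univ_nonempty fun j x => ‖x - s j‖ - w j := by
    ext x
    simp [weightedDist, Finset.inf'_apply]
  rw [this]
  exact Finset.inf'_induction (p := fun f => Integrable f μ) _ _ (fun _ hf _ hg => hf.inf hg)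
    fun j _ => integrable_norm_sub_sub hμ (s j) (w j)

theorem sum_setIntegral_vorCell (hμ : Integrable id μ)
    (hdisj : Pairwise (AEDisjoint μ on vorCell s w)) :
    ∑ i, ∫ x in vorCell s w i, (‖x - s i‖ - w i) ∂μ = ∫ x, weightedDist s w x ∂μ := by
  calc ∑ i, ∫ x in vorCell s w i, (‖x - s i‖ - w i) ∂μ
      = ∑ i, ∫ x in vorCell s w i, weightedDist s w x ∂μ :=
        Finset.sum_congr rfl fun i _ => setIntegral_congr_fun (measurableSet_vorCell s w i)
          fun _ hx => (weightedDist_eq_of_mem_vorCell hx).symm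
    _ = ∫ x in ⋃ i, vorCell s w i, weightedDist s w x ∂μ := by
        rw [integral_iUnion_ae (fun i => (measurableSet_vorCell s w i).nullMeasurableSet) hdisj
          (integrable_weightedDist hμ).integrableOn, tsum_fintype]
    _ = ∫ x, weightedDist s w x ∂μ := by rw [iUnion_vorCell, setIntegral_univ]

theorem Phi_eq_of_pairwise_aedisjoint (hμ : Integrable id μ) (lam : Fin n → ℝ)
    (hdisj : Pairwise (AEDisjoint μ on vorCell s w)) :
    Phi μ s lam w = -∑ i, lam i * w i - ∫ x, weightedDist s w x ∂μ := by
  rw [Phi, Finset.sum_sub_distrib, sum_setIntegral_vorCell hμ hdisj]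
  simp [Finset.sum_neg_distrib]

end WeightedDist

section Minimizer

variable {d n : ℕ} {μ : Measure (EuclideanSpace ℝ (Fin d))} [IsFiniteMeasure μ]
  {s : Fin n → EuclideanSpace ℝ (Fin d)} {lam : Fin n → ℝ}

theorem Phi_add_const (hμ : Integrable id μ) (w : Fin n → ℝ) (c : ℝ) :
    Phi μ s lam (w + fun _ => c) =
      Phi μ s lam w + c * (∑ i, μ.real (vorCell s w i) - ∑ i, lam i) := by
  have hterm : ∀ i, ∫ x in vorCell s w i, (‖x - s i‖ - (w i + c)) ∂μ =
      ∫ x in vorCell s w i, (‖x - s i‖ - w i) ∂μ - μ.real (vorCell s w i) * c := by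
    intro i
    simp_rw [← sub_sub]
    rw [integral_sub (integrable_norm_sub_sub hμ (s i) (w i)).integrableOn
      (integrable_const c).integrableOn, setIntegral_const, smul_eq_mul]
  simp only [Phi, Pi.add_apply, vorCell_add_const, hterm, mul_sub, Finset.mul_sum,
    ← Finset.sum_add_distrib, ← Finset.sum_sub_distrib]
  exact Finset.sum_congr rfl fun i _ => by ring

theorem sum_measureReal_vorCell_eq (hμ : Integrable id μ)
    (hbdd : BddBelow (Set.range (Phi μ s lam))) (w : Fin n → ℝ) :
    ∑ i, μ.real (vorCell s w i) = ∑ i, lam i := by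
  by_contra hne
  obtain ⟨b, hb⟩ := hbdd
  set a := ∑ i, μ.real (vorCell s w i) - ∑ i, lam i
  have ha : a ≠ 0 := sub_ne_zero.2 hne
  have := hb ⟨w + fun _ => (b - Phi μ s lam w - 1) / a, rfl⟩
  rw [Phi_add_const hμ, div_mul_cancel₀ _ ha] at this
  linarith

variable [Nonempty (Fin n)] {w₀ : Fin n → ℝ}

theorem lam_le_measureReal_vorCell_add_single (hμ : Integrable id μ)
    (hdisj : ∀ w, Pairwise (AEDisjoint μ on vorCell s w))
    (hmin : ∀ w, Phi μ s lam w₀ ≤ Phi μ s lam w) (i : Fin n) {t : ℝ} (ht : 0 < t) :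
    lam i ≤ μ.real (vorCell s (w₀ + Pi.single i t) i) := by
  have hΦ := hmin (w₀ + Pi.single i t)
  rw [Phi_eq_of_pairwise_aedisjoint hμ lam (hdisj _),
    Phi_eq_of_pairwise_aedisjoint hμ lam (hdisj _)] at hΦ
  have hlin : ∑ j, lam j * (w₀ + Pi.single i t : Fin n → ℝ) j = ∑ j, lam j * w₀ j + lam i * t := by
    simp [mul_add, Finset.sum_add_distrib, Pi.single_apply]
  have hgain : ∫ x, weightedDist s w₀ x ∂μ - ∫ x, weightedDist s (w₀ + Pi.single i t) x ∂μ ≤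
      μ.real (vorCell s (w₀ + Pi.single i t) i) * t := by
    have hmeas := measurableSet_vorCell s (w₀ + Pi.single i t) i
    rw [← integral_sub (integrable_weightedDist hμ) (integrable_weightedDist hμ),
      ← smul_eq_mul, ← integral_indicator_const t hmeas]
    exact integral_mono ((integrable_weightedDist hμ).sub (integrable_weightedDist hμ))
      ((integrable_const t).indicator hmeas) (weightedDist_sub_le_indicator ht.le)
  exact le_of_mul_le_mul_right (by linarith) ht

theorem lam_le_measureReal_vorCell (hμ : Integrable id μ)
    (hdisj : ∀ w, Pairwise (AEDisjoint μ on vorCell s w))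
    (hmin : ∀ w, Phi μ s lam w₀ ≤ Phi μ s lam w) (i : Fin n) :
    lam i ≤ μ.real (vorCell s w₀ i) := by
  have hanti : Antitone fun k : ℕ => vorCell s (w₀ + Pi.single i (1 / ((k : ℝ) + 1))) i :=
    monotone_vorCell_add_single.comp_antitone fun _ _ hkl => Nat.one_div_le_one_div hkl
  have hlim := hanti.measure_iInter (μ := μ)
    (fun _ => (measurableSet_vorCell _ _ i).nullMeasurableSet) ⟨0, measure_ne_top _ _⟩
  rw [iInter_vorCell_add_single] at hlim
  rw [measureReal_def, ← ENNReal.ofReal_le_iff_le_toReal (measure_ne_top _ _), hlim]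
  exact le_iInf fun k => (ENNReal.ofReal_le_ofReal (lam_le_measureReal_vorCell_add_single hμ hdisj
    hmin i Nat.one_div_pos_of_nat)).trans_eq ofReal_measureReal

end Minimizer

theorem phi_minimizer_adapted_general {d n : ℕ}
    (μ : Measure (EuclideanSpace ℝ (Fin d))) [IsProbabilityMeasure μ]
    (hint : Integrable (fun x => ‖x‖) μ)
    (s : Fin n → EuclideanSpace ℝ (Fin d))
    (lam : Fin n → ℝ) (hlamSum : ∑ i, lam i = 1)
    (wstar : Fin n → ℝ) (hmin : ∀ w : Fin n → ℝ, Phi μ s lam wstar ≤ Phi μ s lam w) :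
    ∀ i : Fin n, μ (vorCell s wstar i) = ENNReal.ofReal (lam i) := by
  intro i
  have : Nonempty (Fin n) := ⟨i⟩
  have hμ : Integrable id μ := (integrable_norm_iff aestronglyMeasurable_id).1 hint
  have hsum := sum_measureReal_vorCell_eq hμ ⟨Phi μ s lam wstar, Set.forall_mem_range.2 hmin⟩
  have hdisj : ∀ w, Pairwise (AEDisjoint μ on vorCell s w) := fun w =>
    pairwise_aedisjoint_of_sum_measureReal_le
      (fun j => (measurableSet_vorCell s w j).nullMeasurableSet) iUnion_vorCell
      (by rw [hsum, hlamSum, probReal_univ])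
  have hle := lam_le_measureReal_vorCell hμ hdisj hmin
  have heq := (Finset.sum_eq_sum_iff_of_le fun j _ => hle j).1 (hsum wstar).symm i
    (Finset.mem_univ i)
  rw [heq, ofReal_measureReal]

/-- Any minimizer `w*` of `Φ` is adapted to `(μ, ν)`: `μ(Vor_S^{w*}(i)) = λ_i` for all `i`. -/
theorem phi_minimizer_adapted {d n : ℕ}
    (μ : Measure (EuclideanSpace ℝ (Fin d))) [IsProbabilityMeasure μ]
    (hac : μ ≪ volume)
    (hint : Integrable (fun x => ‖x‖) μ)
    (s : Fin n → EuclideanSpace ℝ (Fin d)) (hs : Function.Injective s)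
    (lam : Fin n → ℝ) (hlam : ∀ i, 0 < lam i) (hlamSum : ∑ i, lam i = 1)
    (wstar : Fin n → ℝ) (hmin : ∀ w : Fin n → ℝ, Phi μ s lam wstar ≤ Phi μ s lam w) :
    ∀ i : Fin n, μ (vorCell s wstar i) = ENNReal.ofReal (lam i) :=
  phi_minimizer_adapted_general μ hint s lam hlamSum wstar hmin
end
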